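/- Let Σ_G be a p×p real symmetric positive semidefinite matrix of rank d whose d nonzero eigenvalues are positive and pairwise distinct, and let B be a p×d matrix whose columns are orthonormal eigenvectors of Σ_G corresponding to its d largest eigenvalues. Let Σ̃_n be a sequence of random p×p real symmetric matrices with ‖Σ̃_n − Σ_G‖ = O_P(r_n) for some sequence r_n → 0, and let B̃_n be a p×d matrix whose columns are orthonormal eigenvectors of Σ̃_n corresponding to its d largest eigenvalues. Then there exists a sequence of (random) d×d orthogonal matrices Q_n such that ‖B̃_n − B Q_n‖ = O_P(r_n). -/

import Mathlib

open MeasureTheory ProbabilityTheory Matrix Filter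

/-- Spectral norm (largest singular value) of a real matrix. -/
noncomputable def specNorm {m n : Type*} [Fintype m] [Fintype n] [DecidableEq n]
    (A : Matrix m n ℝ) : ℝ :=
  ‖LinearMap.toContinuousLinearMap (Matrix.toEuclideanLin A)‖

/-- `Z n = O_P(a n)`: stochastic boundedness at the rate `a n`. -/
def IsBigOP {Ω : ℕ → Type*} [∀ n, MeasurableSpace (Ω n)] (μ : ∀ n, MeasureTheory.Measure (Ω n))
    (Z : ∀ n, Ω n → ℝ) (a : ℕ → ℝ) : Prop :=
  ∀ δ : ℝ, 0 < δ → ∃ M : ℝ, ∃ N : ℕ, ∀ n ≥ N, μ n {ω | M * a n < |Z n ω|} ≤ ENNReal.ofReal δ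

/-- `B` is a `p × d` matrix whose columns form an orthonormal family of eigenvectors of
`A` with eigenvalues `lam`, corresponding to the `d` largest eigenvalues of `A`: any
eigenvector of `A` orthogonal to all columns of `B` has eigenvalue at most every
`lam j`. -/
def IsTopEigenbasis {p d : ℕ} (A : Matrix (Fin p) (Fin p) ℝ)
    (B : Matrix (Fin p) (Fin d) ℝ) (lam : Fin d → ℝ) : Prop :=
  Bᵀ * B = 1 ∧
  (∀ j, A.mulVec (fun i => B i j) = lam j • fun i => B i j) ∧
  (∀ (c : ℝ) (v : Fin p → ℝ), v ≠ 0 → A.mulVec v = c • v →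
    (∀ j, v ⬝ᵥ (fun i => B i j) = 0) → ∀ j, c ≤ lam j)

/-!
Weyl's inequality, proved by a min-max argument, keeps the top `d` eigenvalues of `Σ̃` above
`λ_min - ‖Σ̃ - Σ‖`. Since `Σ` has rank `d`, its range is spanned by the columns of `B`, so the
projection `J = 1 - B Bᵀ` kills `Σ`, and `J B̃ diag(λ̃) = J (Σ̃ - Σ) B̃` gives the sin θ bound
`‖J B̃‖ ≤ 2 ‖Σ̃ - Σ‖ / λ_min` of Davis–Kahan. Hence `G = Bᵀ B̃` is almost orthogonal, as
`1 - Gᵀ G = (J B̃)ᵀ (J B̃)`, and its polar factor `Q = G (Gᵀ G)^(-1/2)` satisfies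
`B̃ - B Q = J B̃ + B (G - Q) = O(‖Σ̃ - Σ‖)`. This deterministic bound holds as soon as
`‖Σ̃ - Σ‖ ≤ λ_min / 4`, an event whose probability tends to one, so it transfers to `O_P`.
-/

open scoped Matrix.Norms.L2Operator RealInnerProductSpace
open Module Matrix WithLp

namespace LinearMap.IsSymmetric

variable {E : Type*} [NormedAddCommGroup E] [InnerProductSpace ℝ E] [FiniteDimensional ℝ E]
  {T : E →ₗ[ℝ] E}

theorem inner_map_self_le_of_eigenvalue_le (hT : T.IsSymmetric) {m : ℝ}
    (hm : ∀ (c : ℝ) (v : E), v ≠ 0 → T v = c • v → c ≤ m) (x : E) :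
    ⟪x, T x⟫ ≤ m * ‖x‖ ^ 2 := by
  set b := hT.eigenvectorBasis rfl
  set ν := hT.eigenvalues rfl
  have hν : ∀ i, ν i ≤ m := fun i =>
    hm _ _ (b.orthonormal.ne_zero i) (hT.apply_eigenvectorBasis rfl i)
  calc ⟪x, T x⟫ = ∑ i, ν i * b.repr x i ^ 2 := by
        rw [← b.repr.inner_map_map, PiLp.inner_apply]
        refine Finset.sum_congr rfl fun i _ => ?_
        rw [hT.eigenvectorBasis_apply_self_apply]
        simp only [RCLike.inner_apply, conj_trivial, RCLike.ofReal_real_eq_id, id_eq]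
        ring
    _ ≤ ∑ i, m * b.repr x i ^ 2 := by gcongr with i; exact hν i
    _ = m * ‖x‖ ^ 2 := by
        rw [← Finset.mul_sum, ← b.repr.norm_map, EuclideanSpace.norm_sq_eq]
        simp

theorem le_eigenvalue_of_inner_map_self_ge (hT : T.IsSymmetric) {ι : Type*} [Fintype ι]
    {u : ι → E} {lam : ι → ℝ} (hu : ∀ j, T (u j) = lam j • u j)
    (htop : ∀ (c : ℝ) (v : E), v ≠ 0 → T v = c • v → (∀ k, ⟪u k, v⟫ = 0) → ∀ j, c ≤ lam j)
    {U : Submodule ℝ E} (hU : Fintype.card ι ≤ finrank ℝ U) {c : ℝ}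
    (hc : ∀ x ∈ U, c * ‖x‖ ^ 2 ≤ ⟪x, T x⟫) (j : ι) : c ≤ lam j := by
  classical
  set L := LinearMap.pi fun k : {k // k ≠ j} => innerₛₗ ℝ (u k)
  have hmem : ∀ x, x ∈ ker L ↔ ∀ k ≠ j, ⟪u k, x⟫ = 0 := by
    simp [L, funext_iff]
  have hL : ∀ x ∈ ker L, T x ∈ ker L := by
    intro x hx
    rw [hmem] at hx ⊢
    intro k hk
    rw [← hT, hu, real_inner_smul_left, hx k hk, mul_zero]
  -- An eigenvector in `ker L` whose eigenvalue is not `lam j` is also orthogonal to `u j`.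
  have hL_le : ∀ x ∈ ker L, ⟪x, T x⟫ ≤ lam j * ‖x‖ ^ 2 := by
    intro x hx
    refine (hT.restrict_invariant hL).inner_map_self_le_of_eigenvalue_le
      (fun c' v hv hTv => ?_) ⟨x, hx⟩
    have hTv' : T v = c' • (v : E) := congrArg Subtype.val hTv
    by_cases hc' : c' = lam j
    · exact hc'.le
    refine htop c' v (by simpa using hv) hTv' (fun k => ?_) j
    by_cases hk : k = j
    · subst hk
      have h : c' * ⟪u k, v⟫ = lam k * ⟪u k, v⟫ := by
        rw [← real_inner_smul_right, ← hTv', ← hT, hu, real_inner_smul_left]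
      exact (mul_eq_mul_right_iff.1 h).resolve_left hc'
    · exact (hmem v).1 v.2 k hk
  have hdim : finrank ℝ E + 1 ≤ Fintype.card ι + finrank ℝ (ker L) := by
    have hcard : Fintype.card {k // k ≠ j} + 1 = Fintype.card ι := by
      rw [Fintype.card_subtype_compl, Fintype.card_subtype_eq]
      have := Fintype.card_pos_iff.2 ⟨j⟩
      omega
    have hrange := (range L).finrank_le
    rw [finrank_fintype_fun_eq_card] at hrange
    have := L.finrank_range_add_finrank_ker
    omega
  obtain ⟨x, hxU, hxL, hx0⟩ : ∃ x ∈ U, x ∈ ker L ∧ x ≠ 0 := by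
    by_contra! h
    have := Submodule.finrank_add_finrank_le_of_disjoint (Submodule.disjoint_def.2 h)
    omega
  exact le_of_mul_le_mul_right ((hc x hxU).trans (hL_le x hxL)) (by positivity)

theorem sub_le_top_eigenvalue (hT : T.IsSymmetric) {ι ι' : Type*} [Fintype ι] [Fintype ι']
    {u : ι → E} {lam' : ι → ℝ} (hu : ∀ j, T (u j) = lam' j • u j)
    (htop : ∀ (c : ℝ) (v : E), v ≠ 0 → T v = c • v → (∀ k, ⟪u k, v⟫ = 0) → ∀ j, c ≤ lam' j)
    {T₀ : E →ₗ[ℝ] E} {b : ι' → E} {lam : ι' → ℝ} (hb : Orthonormal ℝ b)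
    (hT₀ : ∀ i, T₀ (b i) = lam i • b i) (hcard : Fintype.card ι ≤ Fintype.card ι')
    {l t : ℝ} (hl : ∀ i, l ≤ lam i) (ht : ∀ x, ‖T x - T₀ x‖ ≤ t * ‖x‖) (j : ι) :
    l - t ≤ lam' j := by
  refine hT.le_eigenvalue_of_inner_map_self_ge hu htop
    (by rwa [finrank_span_eq_card hb.linearIndependent]) (fun x hx => ?_) j
  have h₀ : l * ‖x‖ ^ 2 ≤ ⟪x, T₀ x⟫ := by
    obtain ⟨c, rfl⟩ := (Submodule.mem_span_range_iff_exists_fun ℝ).1 hx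
    simp only [map_sum, map_smul, hT₀, smul_smul, ← real_inner_self_eq_norm_sq,
      hb.inner_sum, conj_trivial, Finset.mul_sum]
    exact Finset.sum_le_sum fun i _ => by nlinarith [hl i, mul_self_nonneg (c i)]
  have h₁ := (abs_real_inner_le_norm x (T x - T₀ x)).trans
    (mul_le_mul_of_nonneg_left (ht x) (norm_nonneg x))
  rw [inner_sub_right, mul_left_comm, ← pow_two] at h₁
  linarith [abs_le.1 h₁]

end LinearMap.IsSymmetric

theorem Real.abs_sqrt_sub_one_le {x : ℝ} (hx : 0 ≤ x) : |√x - 1| ≤ |x - 1| := by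
  have h : x - 1 = (√x - 1) * (√x + 1) := by
    linear_combination -(Real.sq_sqrt hx)
  rw [h, abs_mul, abs_of_pos (by positivity : 0 < √x + 1)]
  exact le_mul_of_one_le_right (abs_nonneg _) (by linarith [Real.sqrt_nonneg x])

theorem Finite.exists_pos_forall_le {ι : Type*} [Finite ι] {f : ι → ℝ} (hf : ∀ i, 0 < f i) :
    ∃ l, 0 < l ∧ ∀ i, l ≤ f i := by
  cases isEmpty_or_nonempty ι
  · exact ⟨1, one_pos, isEmptyElim⟩
  · obtain ⟨i, hi⟩ := Finite.exists_min f
    exact ⟨f i, hf i, hi⟩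

namespace Matrix

variable {m n : Type*} [Fintype m] [Fintype n] [DecidableEq n]

theorem l2_opNorm_le_one_of_transpose_mul_self_eq_self {P : Matrix n n ℝ} (h : Pᵀ * P = P) :
    ‖P‖ ≤ 1 := by
  have := P.l2_opNorm_conjTranspose_mul_self
  rw [conjTranspose_eq_transpose_of_trivial, h] at this
  nlinarith [norm_nonneg P]

theorem l2_opNorm_le_one_of_transpose_mul_self_eq_one {M : Matrix m n ℝ} (h : Mᵀ * M = 1) :
    ‖M‖ ≤ 1 := by
  have := M.l2_opNorm_conjTranspose_mul_self
  rw [conjTranspose_eq_transpose_of_trivial, h] at this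
  have h1 := l2_opNorm_le_one_of_transpose_mul_self_eq_self (P := (1 : Matrix n n ℝ)) (by simp)
  nlinarith [norm_nonneg M]

theorem IsHermitian.l2_opNorm_cfc {A : Matrix n n ℝ} (hA : A.IsHermitian) (f : ℝ → ℝ) :
    ‖cfc f A‖ = ‖f ∘ hA.eigenvalues‖ := by
  rw [hA.cfc_eq, IsHermitian.cfc, Unitary.conjStarAlgAut_apply,
    CStarRing.norm_mul_mem_unitary _ (Unitary.star_mem (SetLike.coe_mem _)),
    CStarRing.norm_mem_unitary_mul _ (SetLike.coe_mem _), l2_opNorm_diagonal]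
  rfl

theorem IsHermitian.l2_opNorm_one_sub {A : Matrix n n ℝ} (hA : A.IsHermitian) :
    ‖1 - A‖ = ‖fun i => 1 - hA.eigenvalues i‖ := calc
  ‖1 - A‖ = ‖cfc (fun x => 1 - x) A‖ := by
    rw [cfc_sub (fun _ => (1 : ℝ)) (fun x => x) A ((Set.toFinite _).continuousOn _)
      ((Set.toFinite _).continuousOn _), cfc_const_one ℝ A, cfc_id' ℝ A]
  _ = _ := hA.l2_opNorm_cfc _

theorem exists_transpose_mul_self_eq_one_and_l2_opNorm_sub_le (G : Matrix n n ℝ)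
    (hG : ‖1 - Gᵀ * G‖ < 1) : ∃ Q : Matrix n n ℝ, Qᵀ * Q = 1 ∧ ‖G - Q‖ ≤ ‖1 - Gᵀ * G‖ := by
  set S := Gᵀ * G
  have hS : S.IsHermitian := by
    simpa [conjTranspose_eq_transpose_of_trivial] using isHermitian_conjTranspose_mul_self G
  have hcont (f : ℝ → ℝ) : ContinuousOn f (spectrum ℝ S) := (Set.toFinite _).continuousOn f
  have hpos : ∀ x ∈ spectrum ℝ S, 0 < x := by
    rw [hS.spectrum_real_eq_range_eigenvalues]
    rintro _ ⟨i, rfl⟩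
    have := (norm_le_pi_norm (fun i => 1 - hS.eigenvalues i) i).trans_lt
      (hS.l2_opNorm_one_sub ▸ hG)
    linarith [(abs_lt.1 this).2]
  set R := cfc (fun x => (√x)⁻¹) S
  set C := cfc Real.sqrt S
  have hRC : R * C = 1 := by
    rw [← cfc_mul _ _ S (hcont _) (hcont _), ← cfc_one ℝ S]
    exact cfc_congr fun x hx => inv_mul_cancel₀ (Real.sqrt_pos.2 (hpos x hx)).ne'
  have hRSR : R * S * R = 1 := by
    rw [← cfc_id' ℝ S, ← cfc_mul _ _ S (hcont _) (hcont _), ← cfc_mul _ _ S (hcont _) (hcont _),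
      ← cfc_one ℝ S]
    refine cfc_congr fun x hx => ?_
    rw [Pi.one_apply, mul_right_comm, ← mul_inv, Real.mul_self_sqrt (hpos x hx).le,
      inv_mul_cancel₀ (hpos x hx).ne']
  have hRT : Rᵀ = R := by
    have : IsSelfAdjoint R := cfc_predicate _ S
    rw [← conjTranspose_eq_transpose_of_trivial]
    exact this
  have hQ : (G * R)ᵀ * (G * R) = 1 := by
    rw [transpose_mul, hRT, mul_assoc, ← mul_assoc Gᵀ, ← mul_assoc]
    exact hRSR
  refine ⟨G * R, hQ, ?_⟩
  calc ‖G - G * R‖ = ‖G * R * (C - 1)‖ := by rw [mul_sub, mul_assoc, hRC, mul_one, mul_one]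
    _ ≤ ‖G * R‖ * ‖C - 1‖ := norm_mul_le _ _
    _ ≤ ‖C - 1‖ :=
        mul_le_of_le_one_left (norm_nonneg _) (l2_opNorm_le_one_of_transpose_mul_self_eq_one hQ)
    _ = ‖fun i => √(hS.eigenvalues i) - 1‖ := by
        rw [← cfc_one ℝ S, ← cfc_sub _ _ S (hcont _) (hcont _), hS.l2_opNorm_cfc]
        rfl
    _ ≤ ‖fun i => 1 - hS.eigenvalues i‖ := by
        refine (pi_norm_le_iff_of_nonneg (norm_nonneg _)).2 fun i => ?_
        refine (Real.abs_sqrt_sub_one_le (hpos _ (hS.eigenvalues_mem_spectrum_real i)).le).trans ?_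
        rw [abs_sub_comm]
        exact norm_le_pi_norm (fun i => 1 - hS.eigenvalues i) i
    _ = ‖1 - S‖ := hS.l2_opNorm_one_sub.symm

theorem mul_eq_mul_diagonal_of_mulVec_col {A : Matrix m m ℝ} {B : Matrix m n ℝ} {lam : n → ℝ}
    (h : ∀ j, A *ᵥ (fun i => B i j) = lam j • fun i => B i j) : A * B = B * diagonal lam := by
  ext i j
  rw [mul_diagonal]
  simpa [mul_apply, mulVec, dotProduct, mul_comm] using congrFun (h j) i

theorem mul_transpose_mul_eq_self_of_rank_le [DecidableEq m] {S : Matrix m m ℝ}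
    {B : Matrix m n ℝ} {lam : n → ℝ} (hB : Bᵀ * B = 1) (hSB : S * B = B * diagonal lam)
    (hlam : ∀ j, lam j ≠ 0) (hrank : S.rank ≤ Fintype.card n) : B * Bᵀ * S = S := by
  have hBrank : Fintype.card n ≤ B.rank := by simpa [hB, rank_one] using rank_mul_le_right Bᵀ B
  have hBS : B = S * (B * diagonal fun j => (lam j)⁻¹) := by
    rw [← Matrix.mul_assoc, hSB, Matrix.mul_assoc, diagonal_mul_diagonal]
    simp [hlam]
  have hrange : LinearMap.range S.mulVecLin = LinearMap.range B.mulVecLin := by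
    refine (Submodule.eq_of_le_of_finrank_le ?_ (hrank.trans hBrank)).symm
    rw [hBS, mulVecLin_mul]
    exact LinearMap.range_comp_le_range _ _
  refine toLin'.injective (LinearMap.ext fun x => ?_)
  obtain ⟨y, hy⟩ : S *ᵥ x ∈ LinearMap.range B.mulVecLin := hrange ▸ ⟨x, rfl⟩
  rw [mulVecLin_apply] at hy
  rw [toLin'_apply, toLin'_apply, ← mulVec_mulVec, ← hy, mulVec_mulVec, Matrix.mul_assoc, hB,
    Matrix.mul_one]

theorem l2_opNorm_mul_le_div_of_mul_eq_zero [DecidableEq m] {A S J : Matrix m m ℝ}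
    {B : Matrix m n ℝ} {lam : n → ℝ} {c : ℝ} (hB : Bᵀ * B = 1) (hAB : A * B = B * diagonal lam)
    (hJ : Jᵀ * J = J) (hJS : J * S = 0) (hc : 0 < c) (hlam : ∀ j, c ≤ lam j) :
    ‖J * B‖ ≤ ‖A - S‖ / c := by
  have hpos : ∀ j, 0 < lam j := fun j => hc.trans_le (hlam j)
  have hJB : J * B = J * (A - S) * B * diagonal fun j => (lam j)⁻¹ := by
    rw [Matrix.mul_sub, hJS, sub_zero, Matrix.mul_assoc J A, hAB, Matrix.mul_assoc,
      Matrix.mul_assoc, diagonal_mul_diagonal]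
    simp [fun j => (hpos j).ne']
  have hdiag : ‖(diagonal fun j => (lam j)⁻¹ : Matrix n n ℝ)‖ ≤ c⁻¹ := by
    rw [l2_opNorm_diagonal, pi_norm_le_iff_of_nonneg (by positivity)]
    intro j
    rw [norm_inv, Real.norm_eq_abs, abs_of_pos (hpos j)]
    exact inv_anti₀ hc (hlam j)
  calc ‖J * B‖ ≤ ‖J‖ * ‖A - S‖ * ‖B‖ * ‖(diagonal fun j => (lam j)⁻¹ : Matrix n n ℝ)‖ := by
        rw [hJB]
        refine (l2_opNorm_mul _ _).trans (mul_le_mul_of_nonneg_right ?_ (norm_nonneg _))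
        refine (l2_opNorm_mul _ _).trans (mul_le_mul_of_nonneg_right ?_ (norm_nonneg _))
        exact l2_opNorm_mul _ _
    _ ≤ 1 * ‖A - S‖ * 1 * c⁻¹ := by
        gcongr
        · exact l2_opNorm_le_one_of_transpose_mul_self_eq_self hJ
        · exact l2_opNorm_le_one_of_transpose_mul_self_eq_one hB
    _ = ‖A - S‖ / c := by ring

end Matrix

theorem Matrix.orthonormal_toLp_col {m n : Type*} [Fintype m] [DecidableEq n] {B : Matrix m n ℝ}
    (h : Bᵀ * B = 1) : Orthonormal ℝ fun j => toLp 2 fun i => B i j := by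
  rw [orthonormal_iff_ite]
  intro j k
  rw [EuclideanSpace.inner_toLp_toLp, ← one_apply, ← h]
  simp [mul_apply, dotProduct, mul_comm]

namespace IsTopEigenbasis

variable {p d : ℕ} {S A : Matrix (Fin p) (Fin p) ℝ} {B B' : Matrix (Fin p) (Fin d) ℝ}
  {lam lam' : Fin d → ℝ} {l : ℝ}

theorem sub_le_eigenvalue (hB' : IsTopEigenbasis A B' lam') (hA : Aᵀ = A) (hB : Bᵀ * B = 1)
    (hSB : ∀ j, S *ᵥ (fun i => B i j) = lam j • fun i => B i j) (hl : ∀ j, l ≤ lam j)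
    (j : Fin d) : l - ‖A - S‖ ≤ lam' j := by
  obtain ⟨-, hB'eig, hB'top⟩ := hB'
  refine (isSymmetric_toEuclideanLin_iff.2 (isHermitian_iff_isSymm.2 hA)).sub_le_top_eigenvalue
    (u := fun j => toLp 2 fun i => B' i j) (T₀ := toEuclideanLin S)
    (fun j => ?_) (fun c v hv hAv horth => ?_) (orthonormal_toLp_col hB) (fun j => ?_) le_rfl hl
    (fun x => ?_) j
  · rw [toLpLin_toLp, toLin'_apply, hB'eig, toLp_smul]
  · refine hB'top c v.ofLp (by simpa using hv) (by simpa using congrArg ofLp hAv) fun k => ?_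
    simpa [EuclideanSpace.inner_eq_star_dotProduct] using horth k
  · rw [toLpLin_toLp, toLin'_apply, hSB, toLp_smul]
  · rw [← LinearMap.sub_apply, ← map_sub]
    exact (A - S).l2_opNorm_mulVec x

theorem exists_l2_opNorm_sub_mul_le (hB' : IsTopEigenbasis A B' lam') (hA : Aᵀ = A)
    (hB : Bᵀ * B = 1) (hSB : ∀ j, S *ᵥ (fun i => B i j) = lam j • fun i => B i j)
    (hBS : B * Bᵀ * S = S) (hl : 0 < l) (hlam : ∀ j, l ≤ lam j) (hAS : ‖A - S‖ ≤ l / 4) :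
    ∃ Q : Matrix (Fin d) (Fin d) ℝ, Qᵀ * Q = 1 ∧ ‖B' - B * Q‖ ≤ 3 / l * ‖A - S‖ := by
  have hlam' : ∀ j, l / 2 ≤ lam' j := fun j => by
    linarith [hB'.sub_le_eigenvalue hA hB hSB hlam j]
  obtain ⟨hB'o, hB'eig, -⟩ := hB'
  set t := ‖A - S‖
  set J : Matrix (Fin p) (Fin p) ℝ := 1 - B * Bᵀ
  have hJ : Jᵀ * J = J := by
    have : B * Bᵀ * (B * Bᵀ) = B * Bᵀ := by
      rw [Matrix.mul_assoc, ← Matrix.mul_assoc Bᵀ, hB, Matrix.one_mul]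
    simp only [J, transpose_sub, transpose_one, transpose_mul, transpose_transpose, Matrix.sub_mul,
      Matrix.mul_sub, Matrix.one_mul, Matrix.mul_one, this]
    abel
  have hJS : J * S = 0 := by rw [Matrix.sub_mul, Matrix.one_mul, hBS, sub_self]
  have hJB'norm : ‖J * B'‖ ≤ 2 / l * t :=
    (l2_opNorm_mul_le_div_of_mul_eq_zero hB'o (mul_eq_mul_diagonal_of_mulVec_col hB'eig) hJ hJS
      (by positivity) hlam').trans_eq (by ring)
  set G := Bᵀ * B'
  have hGG : 1 - Gᵀ * G = (J * B')ᵀ * (J * B') := by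
    rw [transpose_mul J B', Matrix.mul_assoc B'ᵀ, ← Matrix.mul_assoc Jᵀ J B', hJ]
    simp only [G, J, transpose_mul, transpose_transpose, Matrix.sub_mul, Matrix.mul_sub,
      Matrix.one_mul, Matrix.mul_assoc, hB'o]
  have hs : 2 / l * t ≤ 1 / 2 := by
    rw [div_mul_eq_mul_div, div_le_iff₀ hl]
    linarith
  have hε : ‖1 - Gᵀ * G‖ ≤ (2 / l * t) ^ 2 := by
    rw [hGG, ← conjTranspose_eq_transpose_of_trivial, l2_opNorm_conjTranspose_mul_self, ← sq]
    exact pow_le_pow_left₀ (norm_nonneg _) hJB'norm 2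
  obtain ⟨Q, hQ, hGQ⟩ := exists_transpose_mul_self_eq_one_and_l2_opNorm_sub_le G
    (hε.trans_lt (by nlinarith [norm_nonneg (J * B')]))
  refine ⟨Q, hQ, ?_⟩
  have hdecomp : B' - B * Q = J * B' + B * (G - Q) := by
    simp only [J, G, Matrix.sub_mul, Matrix.mul_sub, Matrix.one_mul, Matrix.mul_assoc]
    abel
  calc ‖B' - B * Q‖ ≤ ‖J * B'‖ + ‖B‖ * ‖G - Q‖ := by
        rw [hdecomp]
        exact (norm_add_le _ _).trans (by gcongr; exact l2_opNorm_mul _ _)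
    _ ≤ 2 / l * t + 1 * (2 / l * t) ^ 2 := by
        gcongr
        · exact l2_opNorm_le_one_of_transpose_mul_self_eq_one hB
        · exact hGQ.trans hε
    _ ≤ 3 / 2 * (2 / l * t) := by nlinarith [show 0 ≤ 2 / l * t by positivity]
    _ = 3 / l * t := by field_simp

end IsTopEigenbasis

theorem specNorm_eq_l2_opNorm {m n : Type*} [Fintype m] [Fintype n] [DecidableEq n]
    (A : Matrix m n ℝ) : specNorm A = ‖A‖ :=
  rfl

theorem IsBigOP.of_abs_le_mul {Ω : ℕ → Type*} [∀ n, MeasurableSpace (Ω n)]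
    {μ : ∀ n, Measure (Ω n)} {X Z : ∀ n, Ω n → ℝ} {r : ℕ → ℝ} (hX : IsBigOP μ X r)
    (hr : Tendsto r atTop (nhds 0)) {ε C : ℝ} (hε : 0 < ε) (hC : 0 ≤ C)
    (hZ : ∀ n ω, |X n ω| ≤ ε → |Z n ω| ≤ C * |X n ω|) : IsBigOP μ Z r := by
  intro δ hδ
  obtain ⟨M, N, hM⟩ := hX δ hδ
  have hMr : Tendsto (fun n => M * r n) atTop (nhds 0) := by simpa using hr.const_mul M
  obtain ⟨N', hN'⟩ := eventually_atTop.1 (hMr.eventually_lt_const hε)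
  refine ⟨C * M, max N N', fun n hn =>
    (measure_mono fun ω hω => ?_).trans (hM n (le_of_max_le_left hn))⟩
  by_contra hXω
  simp only [Set.mem_ofPred_eq, not_lt] at hω hXω
  have := hZ n ω (hXω.trans (hN' n (le_of_max_le_right hn)).le)
  nlinarith

theorem sdr_eigenbasis_rate_general
    {Ω : ℕ → Type*} [∀ n, MeasurableSpace (Ω n)]
    (μ : ∀ n, MeasureTheory.Measure (Ω n))
    (p d : ℕ)
    (SigG : Matrix (Fin p) (Fin p) ℝ)
    (hrank : SigG.rank = d)
    (lam : Fin d → ℝ) (hpos : ∀ j, 0 < lam j)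
    (B : Matrix (Fin p) (Fin d) ℝ)
    (hB : IsTopEigenbasis SigG B lam)
    (tSig : ∀ n, Ω n → Matrix (Fin p) (Fin p) ℝ)
    (htsymm : ∀ n ω, (tSig n ω)ᵀ = tSig n ω)
    (r : ℕ → ℝ) (hr : Tendsto r atTop (nhds 0))
    (hOP : IsBigOP μ (fun n ω => specNorm (tSig n ω - SigG)) r)
    (tB : ∀ n, Ω n → Matrix (Fin p) (Fin d) ℝ)
    (htB : ∀ n ω, ∃ lam' : Fin d → ℝ, IsTopEigenbasis (tSig n ω) (tB n ω) lam') :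
    ∃ Q : ∀ n, Ω n → Matrix (Fin d) (Fin d) ℝ,
      (∀ n ω, (Q n ω)ᵀ * Q n ω = 1) ∧
      IsBigOP μ (fun n ω => specNorm (tB n ω - B * Q n ω)) r := by
  obtain ⟨hBo, hBeig, -⟩ := hB
  obtain ⟨l, hl, hlam⟩ := Finite.exists_pos_forall_le hpos
  have hBS : B * Bᵀ * SigG = SigG := mul_transpose_mul_eq_self_of_rank_le hBo
    (mul_eq_mul_diagonal_of_mulVec_col hBeig) (fun j => (hpos j).ne') (by simp [hrank])
  have hQ : ∀ n ω, ∃ Q : Matrix (Fin d) (Fin d) ℝ, Qᵀ * Q = 1 ∧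
      (‖tSig n ω - SigG‖ ≤ l / 4 → ‖tB n ω - B * Q‖ ≤ 3 / l * ‖tSig n ω - SigG‖) := by
    intro n ω
    obtain ⟨lam', hB'⟩ := htB n ω
    by_cases hnear : ‖tSig n ω - SigG‖ ≤ l / 4
    · obtain ⟨Q, hQ, hle⟩ :=
        hB'.exists_l2_opNorm_sub_mul_le (htsymm n ω) hBo hBeig hBS hl hlam hnear
      exact ⟨Q, hQ, fun _ => hle⟩
    · exact ⟨1, by simp, fun h => absurd h hnear⟩
  choose Q hQo hQ using hQ
  refine ⟨Q, hQo, hOP.of_abs_le_mul hr (by positivity : 0 < l / 4) (by positivity : 0 ≤ 3 / l)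
    fun n ω => ?_⟩
  simpa only [specNorm_eq_l2_opNorm, abs_norm] using hQ n ω

/-- **Theorem 2 of the paper** (via the Davis–Kahan theorem): if `Σ_G` is symmetric
positive semidefinite of rank `d` with distinct positive nonzero eigenvalues, `B` holds
its top-`d` orthonormal eigenvectors, and `Σ̃ n` are random symmetric matrices with
`‖Σ̃ n − Σ_G‖ = O_P(r n)`, `r n → 0`, then any measurable choice `B̃ n` of top-`d`
orthonormal eigenvectors of `Σ̃ n` satisfies `‖B̃ n − B Q n‖ = O_P(r n)` for some
(random) `d × d` orthogonal matrices `Q n`. -/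
theorem sdr_eigenbasis_rate
    {Ω : ℕ → Type*} [∀ n, MeasurableSpace (Ω n)]
    (μ : ∀ n, MeasureTheory.Measure (Ω n)) [∀ n, IsProbabilityMeasure (μ n)]
    (p d : ℕ)
    (SigG : Matrix (Fin p) (Fin p) ℝ)
    (hsymm : SigG.PosSemidef)
    (hrank : SigG.rank = d)
    (lam : Fin d → ℝ) (hpos : ∀ j, 0 < lam j) (hdist : Function.Injective lam)
    (B : Matrix (Fin p) (Fin d) ℝ)
    (hB : IsTopEigenbasis SigG B lam)
    (tSig : ∀ n, Ω n → Matrix (Fin p) (Fin p) ℝ)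
    (htsymm : ∀ n ω, (tSig n ω)ᵀ = tSig n ω)
    (r : ℕ → ℝ) (hrpos : ∀ n, 0 ≤ r n) (hr : Tendsto r atTop (nhds 0))
    (hOP : IsBigOP μ (fun n ω => specNorm (tSig n ω - SigG)) r)
    (tB : ∀ n, Ω n → Matrix (Fin p) (Fin d) ℝ)
    (htB : ∀ n ω, ∃ lam' : Fin d → ℝ, IsTopEigenbasis (tSig n ω) (tB n ω) lam') :
    ∃ Q : ∀ n, Ω n → Matrix (Fin d) (Fin d) ℝ,
      (∀ n ω, (Q n ω)ᵀ * Q n ω = 1) ∧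
      IsBigOP μ (fun n ω => specNorm (tB n ω - B * Q n ω)) r :=
  sdr_eigenbasis_rate_general μ p d SigG hrank lam hpos B hB tSig htsymm r hr hOP tB htB
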